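/- Let LW₀ denote the real branch of the Lambert W function with values in [−1, 0) on [−e^{−1}, 0), and LW₋₁ the branch with values in (−∞, −1]. Then as z → (−e^{−1})⁺ along (−e^{−1}, 0), one has (LW₀(z) + 1)/√(2e·(z + e^{−1})) → 1 and (LW₋₁(z) + 1)/√(2e·(z + e^{−1})) → −1. -/

import Mathlib

/-- The principal real branch of the Lambert W function on `[−e⁻¹, 0)`:
the unique `w ∈ [−1, 0)` with `w·exp w = z`. -/
noncomputable def LW0neg (z : ℝ) : ℝ :=
  Function.invFunOn (fun w => w * Real.exp w) (Set.Ico (-1) 0) z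

/-- The branch `LW₋₁` of the Lambert W function on `[−e⁻¹, 0)`:
the unique `w ≤ −1` with `w·exp w = z`. -/
noncomputable def LWm1 (z : ℝ) : ℝ :=
  Function.invFunOn (fun w => w * Real.exp w) (Set.Iic (-1)) z

/-!
Write `f w = w·eᵂ`. Since `f'(w) = (w + 1)eᵂ` and `f''(-1) = e⁻¹`, one L'Hôpital step gives
`(w + 1)² / (2e·(f w + e⁻¹)) → 1` as `w → -1`, so `|w + 1| / √(2e·(f w + e⁻¹)) → 1`.
Both branches are right inverses of `f` on a half-line on which `f` is strictly monotone, so they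
tend to `-1` as `z → -e⁻¹`, from the right and from the left respectively; substituting
`z = f (W z)` then fixes the sign of `W z + 1`.
-/

open Real Set Filter Topology

section RightInverse

variable {α β : Type*} [LinearOrder α] [TopologicalSpace α] [OrderTopology α]
  [LinearOrder β] [TopologicalSpace β] [OrderTopology β]
  {f : α → β} {g : β → α} {a : α} {l : Filter β}

theorem StrictMonoOn.tendsto_nhdsGT_of_rightInverse (hf : StrictMonoOn f (Ici a))
    (hl : l ≤ 𝓝[>] f a) (hg : ∀ᶠ z in l, a ≤ g z ∧ f (g z) = z) :
    Tendsto g l (𝓝[>] a) := by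
  refine tendsto_nhdsWithin_iff.2 ⟨tendsto_order.2 ⟨fun b hb => ?_, fun b hb => ?_⟩, ?_⟩
  · filter_upwards [hg] with z hz using hb.trans_le hz.1
  · have hfb : f a < f b := hf self_mem_Ici hb.le hb
    filter_upwards [hg, (nhdsWithin_le_nhds.trans' hl) (Iio_mem_nhds hfb)] with z hz hzb
    rw [← hf.lt_iff_lt hz.1 hb.le, hz.2]
    exact hzb
  · filter_upwards [hg, hl self_mem_nhdsWithin] with z hz hza
    refine hz.1.lt_of_ne fun h => ?_
    rw [h, hz.2] at hza
    exact lt_irrefl z hza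

theorem StrictAntiOn.tendsto_nhdsLT_of_rightInverse (hf : StrictAntiOn f (Iic a))
    (hl : l ≤ 𝓝[>] f a) (hg : ∀ᶠ z in l, g z ≤ a ∧ f (g z) = z) :
    Tendsto g l (𝓝[<] a) :=
  StrictMonoOn.tendsto_nhdsGT_of_rightInverse (α := αᵒᵈ) hf.dual_left hl hg

end RightInverse

theorem hasDerivAt_mul_exp (w : ℝ) : HasDerivAt (fun w => w * exp w) ((w + 1) * exp w) w :=
  ((hasDerivAt_id' w).mul (hasDerivAt_exp w)).congr_deriv (by ring)

theorem strictMonoOn_mul_exp : StrictMonoOn (fun w : ℝ => w * exp w) (Ici (-1)) := by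
  refine strictMonoOn_of_deriv_pos (convex_Ici _) (by fun_prop) fun w hw => ?_
  rw [interior_Ici] at hw
  rw [(hasDerivAt_mul_exp w).deriv]
  exact mul_pos (by linarith [mem_Ioi.1 hw]) (exp_pos w)

theorem strictAntiOn_mul_exp : StrictAntiOn (fun w : ℝ => w * exp w) (Iic (-1)) := by
  refine strictAntiOn_of_deriv_neg (convex_Iic _) (by fun_prop) fun w hw => ?_
  rw [interior_Iic] at hw
  rw [(hasDerivAt_mul_exp w).deriv]
  exact mul_neg_of_neg_of_pos (by linarith [mem_Iio.1 hw]) (exp_pos w)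

theorem tendsto_mul_exp_atBot : Tendsto (fun w : ℝ => w * exp w) atBot (𝓝 0) := by
  have h := (tendsto_pow_mul_exp_neg_atTop_nhds_zero 1).neg.comp tendsto_neg_atBot_atTop
  simpa [Function.comp_def] using h

theorem surjOn_mul_exp_Ico :
    SurjOn (fun w : ℝ => w * exp w) (Ico (-1) 0) (Ico (-exp (-1)) 0) := fun z hz =>
  intermediate_value_Ico (by norm_num : (-1 : ℝ) ≤ 0)
    (continuous_id.mul continuous_exp).continuousOn (by simpa using hz)

theorem surjOn_mul_exp_Iic :
    SurjOn (fun w : ℝ => w * exp w) (Iic (-1)) (Ico (-exp (-1)) 0) := fun z hz =>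
  isPreconnected_Iic.intermediate_value_Ico self_mem_Iic
    (le_principal_iff.2 (Iic_mem_atBot _)) (continuous_id.mul continuous_exp).continuousOn
    tendsto_mul_exp_atBot (by simpa using hz)

theorem LW0neg_spec {z : ℝ} (hz : z ∈ Ico (-exp (-1)) 0) :
    LW0neg z ∈ Ico (-1) 0 ∧ LW0neg z * exp (LW0neg z) = z :=
  ⟨surjOn_mul_exp_Ico.mapsTo_invFunOn hz, surjOn_mul_exp_Ico.rightInvOn_invFunOn hz⟩

theorem LWm1_spec {z : ℝ} (hz : z ∈ Ico (-exp (-1)) 0) :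
    LWm1 z ≤ -1 ∧ LWm1 z * exp (LWm1 z) = z :=
  ⟨surjOn_mul_exp_Iic.mapsTo_invFunOn hz, surjOn_mul_exp_Iic.rightInvOn_invFunOn hz⟩

theorem tendsto_sq_div_mul_exp_add :
    Tendsto (fun w => (w + 1) ^ 2 / (2 * exp 1 * (w * exp w + exp (-1))))
      (𝓝[≠] (-1)) (𝓝 1) := by
  have hne : ∀ᶠ w in 𝓝[≠] (-1 : ℝ), w + 1 ≠ 0 := by
    filter_upwards [self_mem_nhdsWithin] with w hw h
    exact hw (by rw [mem_singleton_iff]; linarith)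
  have hnum : Tendsto (fun w : ℝ => (w + 1) ^ 2) (𝓝[≠] (-1)) (𝓝 0) := by
    refine tendsto_nhdsWithin_of_tendsto_nhds ?_
    simpa using (show Continuous fun w : ℝ => (w + 1) ^ 2 by fun_prop).tendsto (-1)
  have hden : Tendsto (fun w => 2 * exp 1 * (w * exp w + exp (-1))) (𝓝[≠] (-1)) (𝓝 0) := by
    refine tendsto_nhdsWithin_of_tendsto_nhds ?_
    simpa using
      (show Continuous fun w => 2 * exp 1 * (w * exp w + exp (-1)) by fun_prop).tendsto (-1)
  have hderiv : Tendsto (fun w => 2 * (w + 1) ^ 1 * 1 / (2 * exp 1 * ((w + 1) * exp w)))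
      (𝓝[≠] (-1)) (𝓝 1) := by
    have h : Tendsto (fun w => (exp 1 * exp w)⁻¹) (𝓝 (-1)) (𝓝 1) := by
      have := ((continuous_const.mul continuous_exp).tendsto (-1)).inv₀
        (mul_pos (exp_pos 1) (exp_pos (-1))).ne'
      simpa [← exp_add] using this
    refine (h.mono_left nhdsWithin_le_nhds).congr' ?_
    filter_upwards [hne] with w hw
    field_simp
  refine HasDerivAt.lhopital_zero_nhdsNE
    (.of_forall fun w => ((hasDerivAt_id' w).add_const 1).pow 2)
    (.of_forall fun w => ((hasDerivAt_mul_exp w).add_const _).const_mul _) ?_ hnum hden hderiv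
  filter_upwards [hne] with w hw
  positivity

theorem tendsto_abs_add_one_div_sqrt :
    Tendsto (fun w => |w + 1| / sqrt (2 * exp 1 * (w * exp w + exp (-1))))
      (𝓝[≠] (-1)) (𝓝 1) := by
  have h := (continuous_sqrt.tendsto 1).comp tendsto_sq_div_mul_exp_add
  simpa [Function.comp_def, sqrt_div (sq_nonneg _), sqrt_sq_eq_abs] using h

theorem tendsto_add_one_div_sqrt_nhdsGT :
    Tendsto (fun w => (w + 1) / sqrt (2 * exp 1 * (w * exp w + exp (-1))))
      (𝓝[>] (-1)) (𝓝 1) := by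
  refine (tendsto_abs_add_one_div_sqrt.mono_left (nhdsGT_le_nhdsNE _)).congr' ?_
  filter_upwards [self_mem_nhdsWithin] with w hw
  rw [abs_of_pos (neg_lt_iff_pos_add.1 hw)]

theorem tendsto_add_one_div_sqrt_nhdsLT :
    Tendsto (fun w => (w + 1) / sqrt (2 * exp 1 * (w * exp w + exp (-1))))
      (𝓝[<] (-1)) (𝓝 (-1)) := by
  refine (tendsto_abs_add_one_div_sqrt.mono_left (nhdsLT_le_nhdsNE _)).neg.congr' ?_
  filter_upwards [self_mem_nhdsWithin] with w hw
  rw [abs_of_neg (by linarith [mem_Iio.1 hw] : w + 1 < 0), neg_div, neg_neg]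

/-- As `z → (−e⁻¹)⁺` along `(−e⁻¹, 0)`,
`(LW₀(z)+1)/√(2e·(z+e⁻¹)) → 1` and `(LW₋₁(z)+1)/√(2e·(z+e⁻¹)) → −1`. -/
theorem lambertW_branch_behavior :
    Filter.Tendsto
      (fun z => (LW0neg z + 1) / Real.sqrt (2 * Real.exp 1 * (z + Real.exp (-1))))
      (nhdsWithin (-Real.exp (-1)) (Set.Ioo (-Real.exp (-1)) 0)) (nhds 1) ∧
    Filter.Tendsto
      (fun z => (LWm1 z + 1) / Real.sqrt (2 * Real.exp 1 * (z + Real.exp (-1))))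
      (nhdsWithin (-Real.exp (-1)) (Set.Ioo (-Real.exp (-1)) 0)) (nhds (-1)) := by
  have hl : 𝓝[Ioo (-exp (-1)) 0] (-exp (-1)) ≤ 𝓝[>] (-1 * exp (-1)) := by
    rw [neg_one_mul]
    exact nhdsWithin_mono _ Ioo_subset_Ioi_self
  have h0 : ∀ᶠ z in 𝓝[Ioo (-exp (-1)) 0] (-exp (-1)),
      -1 ≤ LW0neg z ∧ LW0neg z * exp (LW0neg z) = z :=
    eventually_nhdsWithin_of_forall fun z hz =>
      (LW0neg_spec (Ioo_subset_Ico_self hz)).imp_left And.left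
  have hm1 : ∀ᶠ z in 𝓝[Ioo (-exp (-1)) 0] (-exp (-1)),
      LWm1 z ≤ -1 ∧ LWm1 z * exp (LWm1 z) = z :=
    eventually_nhdsWithin_of_forall fun z hz => LWm1_spec (Ioo_subset_Ico_self hz)
  constructor
  · refine (tendsto_add_one_div_sqrt_nhdsGT.comp
      (strictMonoOn_mul_exp.tendsto_nhdsGT_of_rightInverse hl h0)).congr' ?_
    filter_upwards [h0] with z hz
    rw [Function.comp_apply, hz.2]
  · refine (tendsto_add_one_div_sqrt_nhdsLT.comp
      (strictAntiOn_mul_exp.tendsto_nhdsLT_of_rightInverse hl hm1)).congr' ?_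
    filter_upwards [hm1] with z hz
    rw [Function.comp_apply, hz.2]
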